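/- arXiv:2407.00212 — 4 statements merged into one kernel-verified Lean document; each statement's English description precedes it below -/
import Mathlib

section
/- Let H be a real Hilbert space, let A be a bounded self-adjoint operator on H, and let M be a bounded positive self-adjoint operator on H. Then the operator S := A + (A² + M)^{1/2} is positive, i.e. S is self-adjoint and ⟨S v, v⟩ ≥ 0 for all v ∈ H. -/
/-!
If `‖A v‖ ≤ ‖B v‖` for all `v` (which `B² = A² + M` with `M ≥ 0` gives) and `B ≥ 0`, then
`A + B ≥ 0`. Otherwise the bottom `m` of the numerical range of `A + B` is negative, and it is an
approximate eigenvalue: `(A + B) u ≈ m u` for unit vectors `u`. Then `A u ≈ m u - B u`, and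
`‖m u - B u‖² = m² - 2 m ⟪u, B u⟫ + ‖B u‖² ≥ m² + ‖B u‖² ≥ m² + ‖A u‖²`, forcing `m² ≈ 0`.
-/

open ContinuousLinearMap RealInnerProductSpace

namespace ContinuousLinearMap

section ApproxEigenvalue

variable {𝕜 E : Type*} [NormedField 𝕜] [SeminormedAddCommGroup E] [NormedSpace 𝕜 E]

def IsApproxEigenvalue (T : E →L[𝕜] E) (μ : 𝕜) : Prop :=
  ∀ ε > 0, ∃ u : E, ‖u‖ = 1 ∧ ‖T u - μ • u‖ < ε

end ApproxEigenvalue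

variable {H : Type*} [NormedAddCommGroup H] [InnerProductSpace ℝ H]

theorem IsPositive.inner_apply_sq_le {T : H →L[ℝ] H} (hT : T.IsPositive) (u w : H) :
    ⟪T u, w⟫ ^ 2 ≤ ⟪T u, u⟫ * ⟪T w, w⟫ := by
  have hsymm : ⟪T w, u⟫ = ⟪T u, w⟫ := by
    rw [hT.inner_left_eq_inner_right, real_inner_comm]
  have hquad : ∀ t : ℝ, 0 ≤ ⟪T u, u⟫ * (t * t) + 2 * ⟪T u, w⟫ * t + ⟪T w, w⟫ := by
    intro t
    have h := hT.inner_nonneg_left (t • u + w)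
    simp only [map_add, map_smul, inner_add_left, inner_add_right, real_inner_smul_left,
      real_inner_smul_right, hsymm] at h
    linarith
  have hdiscr := discrim_le_zero hquad
  rw [discrim] at hdiscr
  nlinarith

theorem IsPositive.norm_apply_sq_le {T : H →L[ℝ] H} (hT : T.IsPositive) (u : H) :
    ‖T u‖ ^ 2 ≤ ‖T‖ * ⟪T u, u⟫ := by
  rcases eq_or_ne (T u) 0 with h0 | h0
  · simp [h0]
  have hcs := hT.inner_apply_sq_le u (T u)
  rw [real_inner_self_eq_norm_sq] at hcs
  have hbound : ⟪T (T u), T u⟫ ≤ ‖T‖ * ‖T u‖ ^ 2 :=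
    calc ⟪T (T u), T u⟫ ≤ ‖T (T u)‖ * ‖T u‖ := real_inner_le_norm _ _
      _ ≤ ‖T‖ * ‖T u‖ * ‖T u‖ := by gcongr; exact T.le_opNorm _
      _ = ‖T‖ * ‖T u‖ ^ 2 := by ring
  have hmul : ‖T u‖ ^ 2 * ‖T u‖ ^ 2 ≤ ‖T‖ * ⟪T u, u⟫ * ‖T u‖ ^ 2 := by
    nlinarith [hT.inner_nonneg_left u]
  exact le_of_mul_le_mul_right hmul (by positivity)

theorem mul_norm_sq_le_inner_of_forall_norm_eq_one {T : H →L[ℝ] H} {m : ℝ}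
    (h : ∀ u, ‖u‖ = 1 → m ≤ ⟪T u, u⟫) (w : H) : m * ‖w‖ ^ 2 ≤ ⟪T w, w⟫ := by
  rcases eq_or_ne w 0 with rfl | hw
  · simp
  have hw' : ‖w‖ ≠ 0 := norm_ne_zero_iff.mpr hw
  have hunit := h (‖w‖⁻¹ • w) (norm_smul_inv_norm (𝕜 := ℝ) hw)
  rw [map_smul, real_inner_smul_left, real_inner_smul_right] at hunit
  calc m * ‖w‖ ^ 2 ≤ ‖w‖⁻¹ * (‖w‖⁻¹ * ⟪T w, w⟫) * ‖w‖ ^ 2 := by gcongr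
    _ = ⟪T w, w⟫ := by field_simp

theorem norm_apply_sub_smul_sq_le {T : H →L[ℝ] H} (hT : T.IsSymmetric) {m : ℝ}
    (hm : ∀ w, m * ‖w‖ ^ 2 ≤ ⟪T w, w⟫) {u : H} (hu : ‖u‖ = 1) :
    ‖T u - m • u‖ ^ 2 ≤ ‖T - m • 1‖ * (⟪T u, u⟫ - m) := by
  have hP : (T - m • 1).IsPositive := by
    refine (isPositive_iff _).2 ⟨?_, fun w => ?_⟩
    · rw [toLinearMap_sub, toLinearMap_smul, toLinearMap_one]
      exact hT.sub (.smul (conj_trivial m) .id)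
    · simpa [inner_sub_left, real_inner_smul_left, real_inner_self_eq_norm_sq] using hm w
  simpa [inner_sub_left, real_inner_smul_left, real_inner_self_eq_norm_sq, hu]
    using hP.norm_apply_sq_le u

theorem exists_neg_isApproxEigenvalue_of_inner_neg {T : H →L[ℝ] H} (hT : T.IsSymmetric)
    {v : H} (hv : ⟪T v, v⟫ < 0) : ∃ m < 0, T.IsApproxEigenvalue m := by
  set S : Set ℝ := (fun u => ⟪T u, u⟫) '' Metric.sphere 0 1
  have hv0 : v ≠ 0 := by
    rintro rfl
    simp at hv
  have hSne : S.Nonempty := ⟨_, ‖v‖⁻¹ • v, by simpa using norm_smul_inv_norm (𝕜 := ℝ) hv0, rfl⟩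
  have hSbdd : BddBelow S := by
    refine ⟨-‖T‖, ?_⟩
    rintro _ ⟨u, hu, rfl⟩
    rw [mem_sphere_zero_iff_norm] at hu
    have := (abs_real_inner_le_norm (T u) u).trans (by simpa [hu] using T.le_opNorm u)
    exact neg_le_of_abs_le this
  set m := sInf S
  have hm : ∀ w, m * ‖w‖ ^ 2 ≤ ⟪T w, w⟫ :=
    mul_norm_sq_le_inner_of_forall_norm_eq_one fun u hu =>
      csInf_le hSbdd ⟨u, mem_sphere_zero_iff_norm.2 hu, rfl⟩
  refine ⟨m, by nlinarith [hm v, sq_nonneg ‖v‖], fun ε hε => ?_⟩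
  set K := ‖T - m • 1‖ + 1
  obtain ⟨_, ⟨u, hu, rfl⟩, hlt⟩ :=
    exists_lt_of_csInf_lt hSne (lt_add_of_pos_right m (show 0 < ε ^ 2 / K by positivity))
  rw [mem_sphere_zero_iff_norm] at hu
  refine ⟨u, hu, lt_of_pow_lt_pow_left₀ 2 hε.le ?_⟩
  calc ‖T u - m • u‖ ^ 2 ≤ ‖T - m • 1‖ * (⟪T u, u⟫ - m) := norm_apply_sub_smul_sq_le hT hm hu
    _ ≤ ‖T - m • 1‖ * (ε ^ 2 / K) := by gcongr; linarith
    _ < ε ^ 2 := by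
      rw [mul_div_assoc', div_lt_iff₀ (by positivity)]
      nlinarith [pow_pos hε 2]

theorem sq_le_mul_norm_add_apply_sub_smul {A B : H →L[ℝ] H} (hB : B.IsPositive)
    (hAB : ∀ v, ‖A v‖ ≤ ‖B v‖) {m : ℝ} (hm : m ≤ 0) {u : H} (hu : ‖u‖ = 1) :
    m ^ 2 ≤ 2 * (|m| + ‖B‖) * ‖(A + B) u - m • u‖ := by
  set d := (A + B) u - m • u
  set w := m • u - B u
  have hAu : A u = w + d := by
    simp only [d, w, add_apply]
    abel
  have hw : m ^ 2 + ‖B u‖ ^ 2 ≤ ‖w‖ ^ 2 := by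
    rw [norm_sub_sq_real, norm_smul, real_inner_smul_left, hu, Real.norm_eq_abs, mul_one, sq_abs]
    nlinarith [hB.inner_nonneg_right u]
  have hwd : ‖w‖ ^ 2 - ‖w + d‖ ^ 2 ≤ 2 * ‖w‖ * ‖d‖ := by
    rw [norm_add_sq_real]
    nlinarith [neg_le_of_abs_le (abs_real_inner_le_norm w d), sq_nonneg ‖d‖]
  have hwle : ‖w‖ ≤ |m| + ‖B‖ :=
    calc ‖w‖ ≤ ‖m • u‖ + ‖B u‖ := norm_sub_le _ _
      _ ≤ |m| + ‖B‖ := by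
        rw [norm_smul, hu, Real.norm_eq_abs, mul_one]
        gcongr
        simpa [hu] using B.le_opNorm u
  have hAle : ‖w + d‖ ^ 2 ≤ ‖B u‖ ^ 2 := by
    rw [← hAu]
    gcongr
    exact hAB u
  calc m ^ 2 ≤ ‖w‖ ^ 2 - ‖w + d‖ ^ 2 := by linarith
    _ ≤ 2 * ‖w‖ * ‖d‖ := hwd
    _ ≤ 2 * (|m| + ‖B‖) * ‖d‖ := by gcongr

theorem IsApproxEigenvalue.nonneg_of_add {A B : H →L[ℝ] H} (hB : B.IsPositive)
    (hAB : ∀ v, ‖A v‖ ≤ ‖B v‖) {m : ℝ} (hm : (A + B).IsApproxEigenvalue m) : 0 ≤ m := by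
  by_contra! hneg
  set c := 2 * (|m| + ‖B‖)
  have hc : 0 ≤ c := by positivity
  have hm2 : 0 < m ^ 2 := by nlinarith
  obtain ⟨u, hu, hd⟩ := hm (m ^ 2 / (c + 1)) (by positivity)
  have hle := sq_le_mul_norm_add_apply_sub_smul hB hAB hneg.le hu
  have : c * ‖(A + B) u - m • u‖ < m ^ 2 :=
    calc c * ‖(A + B) u - m • u‖ ≤ c * (m ^ 2 / (c + 1)) := by gcongr
      _ < m ^ 2 := by
        rw [mul_div_assoc', div_lt_iff₀ (by positivity)]
        linarith
  linarith

theorem isPositive_add_of_norm_apply_le {A B : H →L[ℝ] H} (hA : A.IsSymmetric)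
    (hB : B.IsPositive) (hAB : ∀ v, ‖A v‖ ≤ ‖B v‖) : (A + B).IsPositive := by
  have hsymm : (A + B).IsSymmetric := by
    rw [toLinearMap_add]
    exact hA.add hB.isSymmetric
  refine (isPositive_iff _).2 ⟨hsymm, fun v => ?_⟩
  by_contra! hv
  obtain ⟨m, hm, happrox⟩ := exists_neg_isApproxEigenvalue_of_inner_neg hsymm hv
  exact hm.not_ge (happrox.nonneg_of_add hB hAB)

theorem norm_apply_le_of_comp_self_eq_add {A S M : H →L[ℝ] H} (hA : A.IsSymmetric)
    (hS : S.IsSymmetric) (hM : ∀ v, 0 ≤ ⟪M v, v⟫) (h : S.comp S = A.comp A + M) (v : H) :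
    ‖A v‖ ≤ ‖S v‖ := by
  have hsq : ∀ {T : H →L[ℝ] H}, T.IsSymmetric → ⟪T (T v), v⟫ = ‖T v‖ ^ 2 := fun {T} hT => by
    rw [← real_inner_self_eq_norm_sq]
    exact hT (T v) v
  have hv := congrArg (fun T : H →L[ℝ] H => ⟪T v, v⟫) h
  simp only [comp_apply, add_apply, inner_add_left, hsq hA, hsq hS] at hv
  exact (pow_le_pow_iff_left₀ (norm_nonneg _) (norm_nonneg _) two_ne_zero).1
    (by linarith [hM v])

end ContinuousLinearMap

theorem stmt_2_general
    {H : Type*} [NormedAddCommGroup H] [InnerProductSpace ℝ H] [CompleteSpace H]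
    (A M sq : H →L[ℝ] H)
    (hA : IsSelfAdjoint A)
    (hMpos : ∀ v : H, 0 ≤ ⟪M v, v⟫)
    (hsq_sa : IsSelfAdjoint sq) (hsq_pos : ∀ v : H, 0 ≤ ⟪sq v, v⟫)
    (hsq : sq.comp sq = A.comp A + M) :
    IsSelfAdjoint (A + sq) ∧ ∀ v : H, 0 ≤ ⟪(A + sq) v, v⟫ := by
  have hsq_nonneg : sq.IsPositive := (isPositive_iff' sq).2 ⟨hsq_sa, hsq_pos⟩
  have hle := norm_apply_le_of_comp_self_eq_add hA.isSymmetric hsq_sa.isSymmetric hMpos hsq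
  exact (isPositive_iff' _).1 (isPositive_add_of_norm_apply_le hA.isSymmetric hsq_nonneg hle)

/-- The algebraic Riccati solution `S := A + (A² + M)^{1/2}` is a positive operator. -/
theorem stmt_2
    {H : Type*} [NormedAddCommGroup H] [InnerProductSpace ℝ H] [CompleteSpace H]
    (A M sq : H →L[ℝ] H)
    (hA : IsSelfAdjoint A)
    (hM : IsSelfAdjoint M) (hMpos : ∀ v : H, 0 ≤ ⟪M v, v⟫)
    (hsq_sa : IsSelfAdjoint sq) (hsq_pos : ∀ v : H, 0 ≤ ⟪sq v, v⟫)
    (hsq : sq.comp sq = A.comp A + M) :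
    IsSelfAdjoint (A + sq) ∧ ∀ v : H, 0 ≤ ⟪(A + sq) v, v⟫ :=
  stmt_2_general A M sq hA hMpos hsq_sa hsq_pos hsq
end

section
/- Let H be a separable real Hilbert space, let A be a bounded self-adjoint operator on H, and let (φ_k)_{k∈ℕ} be a Hilbert (orthonormal and complete) basis of H consisting of eigenvectors of A, with A φ_k = λ_k φ_k. Let a ∈ ℝ, suppose the supremum λ̄ := sup_k λ_k is attained at some index k̄ and the infimum λ̲ := inf_k λ_k is attained at some index k̲, and define S := (A + a·I) + ((A + a·I)² + I)^{1/2}, using the unique positive square root. Then for every unit vector ψ ∈ H, (λ̲ + a) + √((λ̲ + a)² + 1) ≤ ⟨S ψ, ψ⟩ ≤ (λ̄ + a) + √((λ̄ + a)² + 1); moreover the upper bound is attained at ψ = φ_{k̄} and the lower bound is attained at ψ = φ_{k̲}. -/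
open ContinuousLinearMap RealInnerProductSpace

/-!
Each basis vector `b k` is an eigenvector of `S` with eigenvalue `f (lam k + a)`, where
`f u = u + √(u² + 1)`: on `b k` the square `sq ∘ sq` acts as `(lam k + a)² + 1`, and a positive
operator `T` with `T (T x) = c² • x`, `c > 0`, must satisfy `T x = c • x`, since `w = T x - c • x`
has `⟪T w, w⟫ = -c ‖w‖²`. Expanding a unit vector `ψ` in the basis, `⟪S ψ, ψ⟫` is the average of
the eigenvalues `f (lam k + a)` with weights `⟪ψ, b k⟫²`, and `f` is monotone.
-/

lemma monotone_add_sqrt_sq_add_one : Monotone fun u : ℝ => u + √(u ^ 2 + 1) := by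
  intro u v huv
  have hu := Real.sq_sqrt (by positivity : 0 ≤ u ^ 2 + 1)
  have hv := Real.sq_sqrt (by positivity : 0 ≤ v ^ 2 + 1)
  have hu0 := Real.sqrt_nonneg (u ^ 2 + 1)
  have hv0 := Real.sqrt_nonneg (v ^ 2 + 1)
  -- `(√(u²+1) - √(v²+1)) (√(u²+1) + √(v²+1)) = (u - v) (u + v)` and `-(u + v) < √(u²+1) + √(v²+1)`.
  have hu' : -u < √(u ^ 2 + 1) := by nlinarith
  have hv' : -v < √(v ^ 2 + 1) := by nlinarith
  show u + √(u ^ 2 + 1) ≤ v + √(v ^ 2 + 1)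
  nlinarith [mul_nonneg (sub_nonneg.2 huv) (by linarith : 0 ≤ √(u ^ 2 + 1) + √(v ^ 2 + 1) + u + v)]

section InnerProductSpace

variable {E : Type*} [NormedAddCommGroup E] [InnerProductSpace ℝ E]

lemma LinearMap.apply_eq_smul_of_apply_apply_eq_sq_smul {T : E →ₗ[ℝ] E}
    (hT : ∀ v, 0 ≤ ⟪T v, v⟫) {c : ℝ} (hc : 0 < c) {x : E} (hx : T (T x) = c ^ 2 • x) :
    T x = c • x := by
  set w := T x - c • x
  have hw : T w = -(c • w) := by
    simp only [w, map_sub, map_smul, hx]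
    module
  have hww : ⟪w, w⟫ = 0 := by
    have := hT w
    rw [hw, inner_neg_left, real_inner_smul_left] at this
    nlinarith [real_inner_self_nonneg (x := w)]
  exact sub_eq_zero.1 (inner_self_eq_zero.1 hww)

variable {ι : Type*} (b : HilbertBasis ι ℝ E)

lemma HilbertBasis.hasSum_inner_sq (x : E) : HasSum (fun i => ⟪x, b i⟫ ^ 2) (‖x‖ ^ 2) := by
  simpa only [real_inner_comm x, ← sq, real_inner_self_eq_norm_sq] using
    b.hasSum_inner_mul_inner x x

variable {T : E →L[ℝ] E} {μ : ι → ℝ}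

lemma HilbertBasis.inner_apply_self_of_apply_eq_smul (hb : ∀ i, T (b i) = μ i • b i) (i : ι) :
    ⟪T (b i), b i⟫ = μ i := by
  rw [hb, real_inner_smul_left, real_inner_self_eq_norm_sq, b.orthonormal.1 i, one_pow, mul_one]

variable [CompleteSpace E]

lemma HilbertBasis.hasSum_inner_apply_self_of_apply_eq_smul (hT : IsSelfAdjoint T)
    (hb : ∀ i, T (b i) = μ i • b i) (x : E) :
    HasSum (fun i => μ i * ⟪x, b i⟫ ^ 2) ⟪T x, x⟫ := by
  have hterm : ∀ i, ⟪T x, b i⟫ * ⟪b i, x⟫ = μ i * ⟪x, b i⟫ ^ 2 := fun i => by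
    rw [show ⟪T x, b i⟫ = ⟪x, T (b i)⟫ from hT.isSymmetric x (b i), hb, real_inner_smul_right,
      real_inner_comm x]
    ring
  simpa only [hterm] using b.hasSum_inner_mul_inner (T x) x

lemma HilbertBasis.inner_apply_self_le_of_apply_eq_smul (hT : IsSelfAdjoint T)
    (hb : ∀ i, T (b i) = μ i • b i) {M : ℝ} (hM : ∀ i, μ i ≤ M) (x : E) :
    ⟪T x, x⟫ ≤ M * ‖x‖ ^ 2 :=
  hasSum_le (fun i => mul_le_mul_of_nonneg_right (hM i) (sq_nonneg _))
    (b.hasSum_inner_apply_self_of_apply_eq_smul hT hb x) ((b.hasSum_inner_sq x).mul_left M)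

lemma HilbertBasis.le_inner_apply_self_of_apply_eq_smul (hT : IsSelfAdjoint T)
    (hb : ∀ i, T (b i) = μ i • b i) {m : ℝ} (hm : ∀ i, m ≤ μ i) (x : E) :
    m * ‖x‖ ^ 2 ≤ ⟪T x, x⟫ :=
  hasSum_le (fun i => mul_le_mul_of_nonneg_right (hm i) (sq_nonneg _))
    ((b.hasSum_inner_sq x).mul_left m) (b.hasSum_inner_apply_self_of_apply_eq_smul hT hb x)

end InnerProductSpace

/-- Maximum trace lemma: when `A` has an orthonormal eigenbasis with eigenvalues
attaining their supremum and infimum, the quadratic form of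
`S := (A + aI) + ((A + aI)² + I)^{1/2}` over unit vectors is pinched between
`(λ̲ + a) + √((λ̲ + a)² + 1)` and `(λ̄ + a) + √((λ̄ + a)² + 1)`, with the bounds
attained at the corresponding eigenvectors. -/
theorem stmt_6
    {H : Type*} [NormedAddCommGroup H] [InnerProductSpace ℝ H] [CompleteSpace H]
    (A sq : H →L[ℝ] H) (a : ℝ)
    (hA : IsSelfAdjoint A)
    (b : HilbertBasis ℕ ℝ H) (lam : ℕ → ℝ)
    (heig : ∀ k, A (b k) = lam k • b k)
    (kmax kmin : ℕ)
    (hkmax : ∀ k, lam k ≤ lam kmax)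
    (hkmin : ∀ k, lam kmin ≤ lam k)
    (hsq_sa : IsSelfAdjoint sq) (hsq_pos : ∀ v : H, 0 ≤ ⟪sq v, v⟫)
    (hsq : sq.comp sq
      = (A + a • ContinuousLinearMap.id ℝ H).comp (A + a • ContinuousLinearMap.id ℝ H)
        + ContinuousLinearMap.id ℝ H) :
    (∀ ψ : H, ‖ψ‖ = 1 →
        (lam kmin + a) + Real.sqrt ((lam kmin + a) ^ 2 + 1)
          ≤ ⟪((A + a • ContinuousLinearMap.id ℝ H) + sq) ψ, ψ⟫ ∧
        ⟪((A + a • ContinuousLinearMap.id ℝ H) + sq) ψ, ψ⟫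
          ≤ (lam kmax + a) + Real.sqrt ((lam kmax + a) ^ 2 + 1)) ∧
    ⟪((A + a • ContinuousLinearMap.id ℝ H) + sq) (b kmax), b kmax⟫
      = (lam kmax + a) + Real.sqrt ((lam kmax + a) ^ 2 + 1) ∧
    ⟪((A + a • ContinuousLinearMap.id ℝ H) + sq) (b kmin), b kmin⟫
      = (lam kmin + a) + Real.sqrt ((lam kmin + a) ^ 2 + 1) := by
  set B := A + a • ContinuousLinearMap.id ℝ H
  have hB : ∀ k, B (b k) = (lam k + a) • b k := fun k => by
    simp only [B, add_apply, heig, smul_apply, id_apply, add_smul]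
  have hsq_eig : ∀ k, sq (b k) = √((lam k + a) ^ 2 + 1) • b k := fun k => by
    refine LinearMap.apply_eq_smul_of_apply_apply_eq_sq_smul (T := sq.toLinearMap) hsq_pos
      (by positivity) ?_
    have hsq_bk := congr($hsq (b k))
    simp only [comp_apply, add_apply, id_apply, hB, map_smul, smul_smul] at hsq_bk
    rw [coe_coe, hsq_bk, Real.sq_sqrt (by positivity), add_smul, one_smul, pow_two]
  have hS_eig : ∀ k, (B + sq) (b k) = (lam k + a + √((lam k + a) ^ 2 + 1)) • b k := fun k => by
    rw [add_apply, hB, hsq_eig, ← add_smul]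
  have hS : IsSelfAdjoint (B + sq) :=
    (hA.add ((IsSelfAdjoint.all a).smul (IsSelfAdjoint.one (H →L[ℝ] H)))).add hsq_sa
  have hmono := monotone_add_sqrt_sq_add_one
  refine ⟨fun ψ hψ => ⟨?_, ?_⟩, b.inner_apply_self_of_apply_eq_smul hS_eig kmax,
    b.inner_apply_self_of_apply_eq_smul hS_eig kmin⟩
  · simpa only [hψ, one_pow, mul_one] using b.le_inner_apply_self_of_apply_eq_smul hS hS_eig
      (fun k => hmono (add_le_add_left (hkmin k) a)) ψ
  · simpa only [hψ, one_pow, mul_one] using b.inner_apply_self_le_of_apply_eq_smul hS hS_eig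
      (fun k => hmono (add_le_add_left (hkmax k) a)) ψ
end

section
/- Let H be a real Hilbert space and T > 0. Let A, H₀, M, M_T and, for each N ∈ ℕ, Aᴺ, H₀ᴺ, Mᴺ, M_Tᴺ be bounded linear operators on H such that ‖Aᴺ − A‖, ‖H₀ᴺ − H₀‖, ‖Mᴺ − M‖ and ‖M_Tᴺ − M_T‖ all tend to 0 (in operator norm) as N → ∞. Let S, Sᴺ : [0,T] → B(H) be continuously differentiable families of bounded self-adjoint operators solving the backward Riccati equations −(d/dt)S(t) = A* S(t) + S(t) A − S(t) H₀ H₀* S(t) + M with S(T) = M_T, and −(d/dt)Sᴺ(t) = Aᴺ* Sᴺ(t) + Sᴺ(t) Aᴺ − Sᴺ(t) H₀ᴺ H₀ᴺ* Sᴺ(t) + Mᴺ with Sᴺ(T) = M_Tᴺ. Assume there is a constant K such that ‖S(t)‖ ≤ K and ‖Sᴺ(t)‖ ≤ K for all N and all t ∈ [0,T]. Then for every t ∈ [0,T], ‖Sᴺ(t) − S(t)‖ → 0 in operator norm as N → ∞. -/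
/-!
The difference `D = Sᴺ - S` of two solutions of the Riccati equation satisfies a linear
differential inequality `‖D'‖ ≤ L ‖D‖ + εᴺ`. Indeed, on the ball of radius `K` the Riccati vector
field is Lipschitz in the state with a constant `L` depending only on `‖A‖` and on a common bound
for `‖H₀‖` and `‖H₀ᴺ‖` (convergent sequences are bounded), and it moves by `O(εᴺ)` when the
coefficients move by `εᴺ`. Grönwall's inequality, run backwards from the terminal time, bounds
`‖D t‖` by `gronwallBound ‖M_Tᴺ - M_T‖ L εᴺ (T - t)`, which tends to `0` with its data.
-/

open ContinuousLinearMap Filter Set Topology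

section NormedRing

variable {R : Type*} [NonUnitalSeminormedRing R]

theorem norm_mul_sub_mul_le (a a' b b' : R) :
    ‖a' * b' - a * b‖ ≤ ‖a' - a‖ * ‖b'‖ + ‖a‖ * ‖b' - b‖ :=
  calc ‖a' * b' - a * b‖ = ‖(a' - a) * b' + a * (b' - b)‖ := by congr 1; noncomm_ring
    _ ≤ _ := (norm_add_le _ _).trans (add_le_add (norm_mul_le _ _) (norm_mul_le _ _))

theorem norm_mul_sub_mul_le' (a a' b b' : R) :
    ‖a' * b' - a * b‖ ≤ ‖a'‖ * ‖b' - b‖ + ‖a' - a‖ * ‖b‖ :=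
  calc ‖a' * b' - a * b‖ = ‖a' * (b' - b) + (a' - a) * b‖ := by congr 1; noncomm_ring
    _ ≤ _ := (norm_add_le _ _).trans (add_le_add (norm_mul_le _ _) (norm_mul_le _ _))

end NormedRing

theorem exists_norm_le_of_tendsto_norm_sub {E : Type*} [SeminormedAddCommGroup E] {u : ℕ → E}
    {x : E} (h : Tendsto (fun n => ‖u n - x‖) atTop (𝓝 0)) :
    ∃ C, ‖x‖ ≤ C ∧ ∀ n, ‖u n‖ ≤ C := by
  obtain ⟨c, hc⟩ := h.bddAbove_range
  refine ⟨‖x‖ + c, le_add_of_nonneg_right ((norm_nonneg _).trans (hc ⟨0, rfl⟩)), fun n => ?_⟩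
  exact (norm_le_norm_add_norm_sub' (u n) x).trans (add_le_add_right (hc ⟨n, rfl⟩) _)

section Gronwall

variable {E : Type*} [NormedAddCommGroup E] [NormedSpace ℝ E]

theorem norm_le_gronwallBound_of_norm_deriv_left_le {f f' : ℝ → E} {δ K ε a b : ℝ}
    (hf : ContinuousOn f (Icc a b)) (hf' : ∀ x ∈ Ioc a b, HasDerivWithinAt f (f' x) (Iic x) x)
    (hb : ‖f b‖ ≤ δ) (bound : ∀ x ∈ Ioc a b, ‖f' x‖ ≤ K * ‖f x‖ + ε) :
    ∀ x ∈ Icc a b, ‖f x‖ ≤ gronwallBound δ K ε (b - x) := by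
  have hreflect : MapsTo (fun x => a + b - x) (Icc a b) (Icc a b) :=
    fun x hx => ⟨by linarith [hx.2], by linarith [hx.1]⟩
  have hreflect' : ∀ x ∈ Ico a b, a + b - x ∈ Ioc a b :=
    fun x hx => ⟨by linarith [hx.2], by linarith [hx.1]⟩
  have key := norm_le_gronwallBound_of_norm_deriv_right_le (f := fun x => f (a + b - x))
    (f' := fun x => -f' (a + b - x))
    (hf.comp (by fun_prop) hreflect)
    (fun x hx => by
      have hflip : HasDerivWithinAt (fun x => a + b - x) (-1) (Ici x) x := by
        simpa using ((hasDerivAt_id x).const_sub (a + b)).hasDerivWithinAt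
      have := (hf' _ (hreflect' x hx)).scomp x hflip
        fun y hy => show a + b - y ≤ a + b - x by linarith [hy.out]
      rwa [neg_one_smul] at this)
    (by simpa using hb)
    (fun x hx => by simpa using bound _ (hreflect' x hx))
  intro x hx
  simpa [show a + b - x - a = b - x by ring] using key (a + b - x) (hreflect hx)

theorem tendsto_gronwallBound_zero {ι : Type*} {l : Filter ι} {δ ε : ι → ℝ}
    (hδ : Tendsto δ l (𝓝 0)) (hε : Tendsto ε l (𝓝 0)) (K x : ℝ) :
    Tendsto (fun i => gronwallBound (δ i) K (ε i) x) l (𝓝 0) := by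
  rcases eq_or_ne K 0 with rfl | hK
  · simpa [gronwallBound_K0] using hδ.add (hε.mul_const x)
  · simpa [gronwallBound_of_K_ne_0 hK] using
      (hδ.mul_const _).add ((hε.div_const K).mul_const _)

end Gronwall

section Riccati

variable {R : Type*} [NormedRing R] [StarRing R] [NormedStarGroup R]

def riccatiField (A B M X : R) : R :=
  star A * X + X * A - X * (B * (star B * X)) + M

theorem norm_riccatiField_sub_le {A A' B B' M M' X X' : R} {b K : ℝ}
    (hB : ‖B‖ ≤ b) (hB' : ‖B'‖ ≤ b) (hX : ‖X‖ ≤ K) (hX' : ‖X'‖ ≤ K) :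
    ‖riccatiField A' B' M' X' - riccatiField A B M X‖ ≤
      (2 * ‖A‖ + 2 * b ^ 2 * K) * ‖X' - X‖
        + (2 * K * ‖A' - A‖ + 2 * b * K ^ 2 * ‖B' - B‖ + ‖M' - M‖) := by
  have hb : 0 ≤ b := (norm_nonneg _).trans hB
  have hK : 0 ≤ K := (norm_nonneg _).trans hX
  have hlin₁ : ‖star A' * X' - star A * X‖ ≤ ‖A' - A‖ * K + ‖A‖ * ‖X' - X‖ := by
    refine (norm_mul_sub_mul_le _ _ _ _).trans ?_
    rw [← star_sub, norm_star, norm_star]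
    gcongr
  have hlin₂ : ‖X' * A' - X * A‖ ≤ K * ‖A' - A‖ + ‖X' - X‖ * ‖A‖ :=
    (norm_mul_sub_mul_le' _ _ _ _).trans (by gcongr)
  have hstarBX : ‖star B' * X' - star B * X‖ ≤ ‖B' - B‖ * K + b * ‖X' - X‖ := by
    refine (norm_mul_sub_mul_le _ _ _ _).trans ?_
    rw [← star_sub, norm_star, norm_star]
    gcongr
  have hBBX : ‖B' * (star B' * X') - B * (star B * X)‖
      ≤ ‖B' - B‖ * (b * K) + b * (‖B' - B‖ * K + b * ‖X' - X‖) := by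
    refine (norm_mul_sub_mul_le _ _ _ _).trans ?_
    gcongr
    exact (norm_mul_le _ _).trans (by rw [norm_star]; gcongr)
  have hquad : ‖X' * (B' * (star B' * X')) - X * (B * (star B * X))‖
      ≤ ‖X' - X‖ * (b * (b * K))
          + K * (‖B' - B‖ * (b * K) + b * (‖B' - B‖ * K + b * ‖X' - X‖)) := by
    refine (norm_mul_sub_mul_le _ _ _ _).trans ?_
    gcongr
    refine (norm_mul_le _ _).trans ?_
    gcongr
    exact (norm_mul_le _ _).trans (by rw [norm_star]; gcongr)
  calc ‖riccatiField A' B' M' X' - riccatiField A B M X‖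
      = ‖(star A' * X' - star A * X) + (X' * A' - X * A)
          - (X' * (B' * (star B' * X')) - X * (B * (star B * X))) + (M' - M)‖ := by
        unfold riccatiField; congr 1; abel
    _ ≤ ‖star A' * X' - star A * X‖ + ‖X' * A' - X * A‖
          + ‖X' * (B' * (star B' * X')) - X * (B * (star B * X))‖ + ‖M' - M‖ :=
        (norm_add_le _ _).trans <| by
          gcongr
          exact (norm_sub_le _ _).trans (by gcongr; exact norm_add_le _ _)
    _ ≤ _ := by linear_combination hlin₁ + hlin₂ + hquad

variable [NormedSpace ℝ R]

theorem norm_sub_le_gronwallBound_of_riccati {A A' B B' M M' : R} {S S' : ℝ → R}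
    {t₀ T b K : ℝ}
    (hS : ∀ t ∈ Icc t₀ T, HasDerivWithinAt S (-riccatiField A B M (S t)) (Icc t₀ T) t)
    (hS' : ∀ t ∈ Icc t₀ T, HasDerivWithinAt S' (-riccatiField A' B' M' (S' t)) (Icc t₀ T) t)
    (hB : ‖B‖ ≤ b) (hB' : ‖B'‖ ≤ b)
    (hSK : ∀ t ∈ Icc t₀ T, ‖S t‖ ≤ K) (hS'K : ∀ t ∈ Icc t₀ T, ‖S' t‖ ≤ K) :
    ∀ t ∈ Icc t₀ T, ‖S' t - S t‖ ≤ gronwallBound ‖S' T - S T‖ (2 * ‖A‖ + 2 * b ^ 2 * K)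
      (2 * K * ‖A' - A‖ + 2 * b * K ^ 2 * ‖B' - B‖ + ‖M' - M‖) (T - t) := by
  have hD : ∀ t ∈ Icc t₀ T, HasDerivWithinAt (fun t => S' t - S t)
      (-riccatiField A' B' M' (S' t) - -riccatiField A B M (S t)) (Icc t₀ T) t :=
    fun t ht => (hS' t ht).sub (hS t ht)
  refine norm_le_gronwallBound_of_norm_deriv_left_le (fun t ht => (hD t ht).continuousWithinAt)
    (fun t ht => (hD t (Ioc_subset_Icc_self ht)).mono_of_mem_nhdsWithin
      (Icc_mem_nhdsLE_of_mem ht)) le_rfl (fun t ht => ?_)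
  rw [neg_sub_neg, norm_sub_rev]
  exact norm_riccatiField_sub_le hB hB' (hSK t (Ioc_subset_Icc_self ht))
    (hS'K t (Ioc_subset_Icc_self ht))

end Riccati

theorem stmt_9_general
    {H : Type*} [NormedAddCommGroup H] [InnerProductSpace ℝ H] [CompleteSpace H]
    (T : ℝ)
    (A H0 M MT : H →L[ℝ] H) (AN H0N MN MTN : ℕ → H →L[ℝ] H)
    (hAconv : Tendsto (fun N => ‖AN N - A‖) atTop (nhds 0))
    (hH0conv : Tendsto (fun N => ‖H0N N - H0‖) atTop (nhds 0))
    (hMconv : Tendsto (fun N => ‖MN N - M‖) atTop (nhds 0))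
    (hMTconv : Tendsto (fun N => ‖MTN N - MT‖) atTop (nhds 0))
    (S : ℝ → H →L[ℝ] H) (SN : ℕ → ℝ → H →L[ℝ] H)
    (hSderiv : ∀ t ∈ Set.Icc (0 : ℝ) T,
      HasDerivWithinAt S
        (-((adjoint A).comp (S t) + (S t).comp A
            - (S t).comp (H0.comp ((adjoint H0).comp (S t))) + M))
        (Set.Icc (0 : ℝ) T) t)
    (hSterm : S T = MT)
    (hSNderiv : ∀ N, ∀ t ∈ Set.Icc (0 : ℝ) T,
      HasDerivWithinAt (SN N)
        (-((adjoint (AN N)).comp (SN N t) + (SN N t).comp (AN N)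
            - (SN N t).comp ((H0N N).comp ((adjoint (H0N N)).comp (SN N t))) + MN N))
        (Set.Icc (0 : ℝ) T) t)
    (hSNterm : ∀ N, SN N T = MTN N)
    (K : ℝ)
    (hK : ∀ t ∈ Set.Icc (0 : ℝ) T, ‖S t‖ ≤ K)
    (hKN : ∀ N, ∀ t ∈ Set.Icc (0 : ℝ) T, ‖SN N t‖ ≤ K) :
    ∀ t ∈ Set.Icc (0 : ℝ) T,
      Tendsto (fun N => ‖SN N t - S t‖) atTop (nhds 0) := by
  intro t ht
  obtain ⟨b, hH0, hH0N⟩ := exists_norm_le_of_tendsto_norm_sub hH0conv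
  refine squeeze_zero (fun N => norm_nonneg _) (fun N => norm_sub_le_gronwallBound_of_riccati
    hSderiv (hSNderiv N) hH0 (hH0N N) hK (hKN N) t ht) ?_
  simp only [hSterm, hSNterm]
  refine tendsto_gronwallBound_zero hMTconv ?_ _ _
  simpa using ((hAconv.const_mul (2 * K)).add (hH0conv.const_mul (2 * b * K ^ 2))).add hMconv

/-- Convergence of solutions of backward operator Riccati equations under
operator-norm convergence of the coefficients. -/
theorem stmt_9
    {H : Type*} [NormedAddCommGroup H] [InnerProductSpace ℝ H] [CompleteSpace H]
    (T : ℝ) (hT : 0 < T)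
    (A H0 M MT : H →L[ℝ] H) (AN H0N MN MTN : ℕ → H →L[ℝ] H)
    (hAconv : Tendsto (fun N => ‖AN N - A‖) atTop (nhds 0))
    (hH0conv : Tendsto (fun N => ‖H0N N - H0‖) atTop (nhds 0))
    (hMconv : Tendsto (fun N => ‖MN N - M‖) atTop (nhds 0))
    (hMTconv : Tendsto (fun N => ‖MTN N - MT‖) atTop (nhds 0))
    (S : ℝ → H →L[ℝ] H) (SN : ℕ → ℝ → H →L[ℝ] H)
    (hSsa : ∀ t ∈ Set.Icc (0 : ℝ) T, IsSelfAdjoint (S t))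
    (hSNsa : ∀ N, ∀ t ∈ Set.Icc (0 : ℝ) T, IsSelfAdjoint (SN N t))
    (hSderiv : ∀ t ∈ Set.Icc (0 : ℝ) T,
      HasDerivWithinAt S
        (-((adjoint A).comp (S t) + (S t).comp A
            - (S t).comp (H0.comp ((adjoint H0).comp (S t))) + M))
        (Set.Icc (0 : ℝ) T) t)
    (hSterm : S T = MT)
    (hSNderiv : ∀ N, ∀ t ∈ Set.Icc (0 : ℝ) T,
      HasDerivWithinAt (SN N)
        (-((adjoint (AN N)).comp (SN N t) + (SN N t).comp (AN N)
            - (SN N t).comp ((H0N N).comp ((adjoint (H0N N)).comp (SN N t))) + MN N))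
        (Set.Icc (0 : ℝ) T) t)
    (hSNterm : ∀ N, SN N T = MTN N)
    (K : ℝ)
    (hK : ∀ t ∈ Set.Icc (0 : ℝ) T, ‖S t‖ ≤ K)
    (hKN : ∀ N, ∀ t ∈ Set.Icc (0 : ℝ) T, ‖SN N t‖ ≤ K) :
    ∀ t ∈ Set.Icc (0 : ℝ) T,
      Tendsto (fun N => ‖SN N t - S t‖) atTop (nhds 0) :=
  stmt_9_general T A H0 M MT AN H0N MN MTN hAconv hH0conv hMconv hMTconv S SN hSderiv hSterm
    hSNderiv hSNterm K hK hKN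
end

section
/- For every x ∈ [0,1], ∫₀¹ (1 − max(x, y)) · cos(π y / 2) dy = (4/π²) · cos(π x / 2). Consequently, the function φ(x) = cos(πx/2) is an eigenfunction, with eigenvalue 4/π², of the integral operator on L²[0,1] with kernel W(x,y) = 1 − max(x,y). -/
open MeasureTheory Real

/-! Split the integral at `y = x`: on `[0, x]` the kernel is the constant `1 - x`, on `[x, 1]` it
is `1 - y`. Integrating `cos (c y)` and `(1 - y) cos (c y)` explicitly, the `sin (c x)` terms
cancel and, for `c = π / 2`, `cos c = 0` leaves `cos (c x) / c ^ 2`. The operator statement only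
transports this pointwise identity through the a.e. equalities describing `T` and `φ`. -/

theorem integral_cos_mul {c : ℝ} (hc : c ≠ 0) (a b : ℝ) :
    ∫ y in a..b, cos (c * y) = (sin (c * b) - sin (c * a)) / c := by
  rw [intervalIntegral.integral_comp_mul_left (fun y => cos y) hc, integral_cos, smul_eq_mul,
    inv_mul_eq_div]

theorem integral_sub_mul_cos_mul {c : ℝ} (hc : c ≠ 0) (a b : ℝ) :
    ∫ y in a..b, (b - y) * cos (c * y)
      = (cos (c * a) - cos (c * b)) / c ^ 2 - (b - a) * sin (c * a) / c := by
  have hF : ∀ y, HasDerivAt (fun y => (b - y) * sin (c * y) / c - cos (c * y) / c ^ 2)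
      ((b - y) * cos (c * y)) y := by
    intro y
    have hcy : HasDerivAt (fun y => c * y) c y := by simpa using (hasDerivAt_id y).const_mul c
    refine ((((hasDerivAt_id' y).const_sub b).mul hcy.sin).div_const c |>.sub
      (hcy.cos.div_const (c ^ 2))).congr_deriv ?_
    field_simp
    ring
  rw [intervalIntegral.integral_eq_sub_of_hasDerivAt (fun y _ => hF y)
    (by apply Continuous.intervalIntegrable; fun_prop)]
  simp only [sub_self, zero_mul, zero_div]
  ring

theorem integral_sub_max_mul_cos_mul {c x b : ℝ} (hc : c ≠ 0) (hx0 : 0 ≤ x) (hxb : x ≤ b) :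
    ∫ y in 0..b, (b - max x y) * cos (c * y) = (cos (c * x) - cos (c * b)) / c ^ 2 := by
  have hint : ∀ u v, IntervalIntegrable (fun y => (b - max x y) * cos (c * y)) volume u v :=
    fun u v => by apply Continuous.intervalIntegrable; fun_prop
  rw [← intervalIntegral.integral_add_adjacent_intervals (hint 0 x) (hint x b)]
  have hleft : ∫ y in 0..x, (b - max x y) * cos (c * y) = ∫ y in 0..x, (b - x) * cos (c * y) :=
    intervalIntegral.integral_congr fun y hy => by
      rw [Set.uIcc_of_le hx0] at hy
      rw [max_eq_left hy.2]
  have hright : ∫ y in x..b, (b - max x y) * cos (c * y) = ∫ y in x..b, (b - y) * cos (c * y) :=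
    intervalIntegral.integral_congr fun y hy => by
      rw [Set.uIcc_of_le hxb] at hy
      rw [max_eq_right hy.1]
  rw [hleft, hright, intervalIntegral.integral_const_mul, integral_cos_mul hc,
    integral_sub_mul_cos_mul hc]
  simp only [mul_zero, sin_zero, sub_zero]
  ring

theorem integral_Icc_one_sub_max_mul_cos {x : ℝ} (hx : x ∈ Set.Icc (0 : ℝ) 1) :
    ∫ y in Set.Icc (0 : ℝ) 1, (1 - max x y) * cos (π * y / 2) = (4 / π ^ 2) * cos (π * x / 2) := by
  rw [integral_Icc_eq_integral_Ioc, ← intervalIntegral.integral_of_le zero_le_one]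
  simp_rw [mul_div_right_comm π]
  rw [integral_sub_max_mul_cos_mul (div_ne_zero pi_ne_zero two_ne_zero) hx.1 hx.2, mul_one,
    cos_pi_div_two]
  field_simp
  ring

theorem MeasureTheory.Lp.eq_smul_of_ae_eq_integral_kernel {α : Type*} [MeasurableSpace α]
    {μ : Measure α} {p : ENNReal} {ψ φ : Lp ℝ p μ} {K : α → α → ℝ} {g : α → ℝ} {c : ℝ}
    (hψ : ψ =ᵐ[μ] fun x => ∫ y, K x y * φ y ∂μ) (hφ : φ =ᵐ[μ] g)
    (hg : ∀ᵐ x ∂μ, ∫ y, K x y * g y ∂μ = c * g x) : ψ = c • φ := by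
  apply Lp.ext
  have hφK : ∀ x, ∫ y, K x y * φ y ∂μ = ∫ y, K x y * g y ∂μ :=
    fun x => integral_congr_ae (hφ.mono fun y hy => by simp only [hy])
  filter_upwards [hψ, hφ, hg, Lp.coeFn_smul c φ] with x hψx hφx hgx hsx
  rw [hψx, hφK, hgx, hsx, Pi.smul_apply, hφx, smul_eq_mul]

/-- For every `x ∈ [0,1]`, `∫₀¹ (1 − max(x,y)) cos(πy/2) dy = (4/π²) cos(πx/2)`;
consequently `cos(πx/2)` is an eigenfunction with eigenvalue `4/π²` of the
integral operator on `L²[0,1]` with the uniform attachment graphon kernel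
`W(x,y) = 1 − max(x,y)`. -/
theorem stmt_13 :
    (∀ x ∈ Set.Icc (0 : ℝ) 1,
      ∫ y in Set.Icc (0 : ℝ) 1, (1 - max x y) * Real.cos (π * y / 2)
        = (4 / π ^ 2) * Real.cos (π * x / 2)) ∧
    ∀ (T : Lp ℝ 2 (volume.restrict (Set.Icc (0 : ℝ) 1))
        →L[ℝ] Lp ℝ 2 (volume.restrict (Set.Icc (0 : ℝ) 1))),
      (∀ f : Lp ℝ 2 (volume.restrict (Set.Icc (0 : ℝ) 1)),
        (T f : ℝ → ℝ) =ᵐ[volume.restrict (Set.Icc (0 : ℝ) 1)]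
          fun x => ∫ y, (1 - max x y) * f y ∂(volume.restrict (Set.Icc (0 : ℝ) 1))) →
      ∀ φ : Lp ℝ 2 (volume.restrict (Set.Icc (0 : ℝ) 1)),
        (φ : ℝ → ℝ) =ᵐ[volume.restrict (Set.Icc (0 : ℝ) 1)]
          (fun x => Real.cos (π * x / 2)) →
        T φ = (4 / π ^ 2 : ℝ) • φ := by
  refine ⟨fun x hx => integral_Icc_one_sub_max_mul_cos hx, fun T hT φ hφ => ?_⟩
  refine Lp.eq_smul_of_ae_eq_integral_kernel (hT φ) hφ ?_
  filter_upwards [ae_restrict_mem measurableSet_Icc] with x hx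
  exact integral_Icc_one_sub_max_mul_cos hx
end
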